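/- Let μ > 0, κ = (μ+4)/4. The point (x, y) ∈ ℝ³ × ℝ³ with x₃ = 0, y = Σx (where Σ = [[0,-1,0],[1,0,0],[0,0,0]]) satisfies ∇ₓV(x,ν,μ,ε) = Σ²x for all ν ∈ ℝ and all ε ∈ [0,1) if and only if (1+x₁)² + x₂² = 1, where V(x,ν,μ,ε) = (1/(1+ε cos ν))·(-(ε cos ν/2)‖x‖² + (1/κ)W(x,μ) + x₁) and W is as above. -/

import Mathlib

/-!
On the plane `x₃ = 0` the two terms of `κ⁻¹ W` merge into `1 / d` with `d = √((1 + x₁)² + x₂²)`,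
and `V` depends on `x₃` only through `x₃²`, so `∂V/∂x₃` vanishes there. Writing `e = ε cos ν`, the
remaining two components of `∇V - Σ² x` equal `(1 - d⁻³) / (1 + e) • (1 + x₁, x₂)`. Since
`(1 + x₁, x₂) ≠ 0`, this vanishes for one (equivalently, for every) admissible `e` iff `d = 1`.
-/

open Real

theorem hasDerivAt_comp_sq_zero {g : ℝ → ℝ} (hg : DifferentiableAt ℝ g 0) :
    HasDerivAt (fun s => g (s ^ 2)) 0 0 := by
  have hsq : HasDerivAt (fun s : ℝ => s ^ 2) 0 0 := by simpa using hasDerivAt_pow 2 (0 : ℝ)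
  have := hg.hasDerivAt.comp_of_eq 0 hsq (by norm_num)
  rwa [mul_zero] at this

theorem hasDerivAt_inv_sqrt {u : ℝ → ℝ} {u' x : ℝ} (hu : HasDerivAt u u' x) (hx : 0 < u x) :
    HasDerivAt (fun s => (√(u s))⁻¹) (-u' / (2 * √(u x) ^ 3)) x := by
  have hs : √(u x) ≠ 0 := (sqrt_pos.mpr hx).ne'
  refine (((hasDerivAt_sqrt hx.ne').comp x hu).inv hs).congr_deriv ?_
  simp only [Function.comp_apply]
  field_simp

/-- `V` restricted to the plane `x₃ = 0`, with `e = ε cos ν`. -/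
noncomputable def planarPotential (e a b : ℝ) : ℝ :=
  (1 + e)⁻¹ * (-(e / 2) * (a ^ 2 + b ^ 2) + (√((1 + a) ^ 2 + b ^ 2))⁻¹ + a)

theorem hasDerivAt_planarPotential_fst {e a b : ℝ} (he : 1 + e ≠ 0)
    (hd : 0 < (1 + a) ^ 2 + b ^ 2) :
    HasDerivAt (fun s => planarPotential e s b)
      (-a + (1 - (√((1 + a) ^ 2 + b ^ 2) ^ 3)⁻¹) / (1 + e) * (1 + a)) a := by
  have hu : HasDerivAt (fun s : ℝ => (1 + s) ^ 2 + b ^ 2) (2 * (1 + a)) a := by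
    simpa using (((hasDerivAt_id a).const_add 1).pow 2).add_const (b ^ 2)
  have hq : HasDerivAt (fun s : ℝ => -(e / 2) * (s ^ 2 + b ^ 2)) (-(e / 2) * (2 * a)) a := by
    simpa using ((hasDerivAt_pow 2 a).add_const (b ^ 2)).const_mul (-(e / 2))
  refine (((hq.add (hasDerivAt_inv_sqrt hu hd)).add (hasDerivAt_id a)).const_mul
    (1 + e)⁻¹).congr_deriv ?_
  have : √((1 + a) ^ 2 + b ^ 2) ≠ 0 := (sqrt_pos.mpr hd).ne'
  field_simp
  ring

theorem hasDerivAt_planarPotential_snd {e a b : ℝ} (he : 1 + e ≠ 0)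
    (hd : 0 < (1 + a) ^ 2 + b ^ 2) :
    HasDerivAt (fun s => planarPotential e a s)
      (-b + (1 - (√((1 + a) ^ 2 + b ^ 2) ^ 3)⁻¹) / (1 + e) * b) b := by
  have hu : HasDerivAt (fun s : ℝ => (1 + a) ^ 2 + s ^ 2) (2 * b) b := by
    simpa using (hasDerivAt_pow 2 b).const_add ((1 + a) ^ 2)
  have hq : HasDerivAt (fun s : ℝ => -(e / 2) * (a ^ 2 + s ^ 2)) (-(e / 2) * (2 * b)) b := by
    simpa using ((hasDerivAt_pow 2 b).const_add (a ^ 2)).const_mul (-(e / 2))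
  refine (((hq.add (hasDerivAt_inv_sqrt hu hd)).add_const a).const_mul (1 + e)⁻¹).congr_deriv ?_
  have : √((1 + a) ^ 2 + b ^ 2) ≠ 0 := (sqrt_pos.mpr hd).ne'
  field_simp
  ring

theorem one_add_mul_cos_pos {ε : ℝ} (hε₀ : 0 ≤ ε) (hε₁ : ε < 1) (ν : ℝ) :
    0 < 1 + ε * cos ν := by
  nlinarith [mul_le_mul_of_nonneg_left (neg_one_le_cos ν) hε₀]

theorem add_four_div_four_inv_mul_add_inv {μ : ℝ} (hμ : μ + 4 ≠ 0) (D : ℝ) :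
    ((μ + 4) / 4)⁻¹ * (μ / (4 * D) + D⁻¹) = D⁻¹ := by
  rcases eq_or_ne D 0 with rfl | hD
  · simp
  · field_simp

theorem eq_one_of_inv_sqrt_pow_three_eq_one {q : ℝ} (h : (√q ^ 3)⁻¹ = 1) : q = 1 := by
  rwa [inv_eq_one, pow_eq_one_iff_of_nonneg (sqrt_nonneg q) three_ne_zero, sqrt_eq_one] at h

theorem stmt_8 (μ κ : ℝ) (hμ : 0 < μ) (hκ : κ = (μ+4)/4)
    (V : ℝ → ℝ → ℝ → ℝ → ℝ → ℝ)
    (hV : ∀ x₁ x₂ x₃ ν ε, V x₁ x₂ x₃ ν ε =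
      (1/(1 + ε * Real.cos ν)) *
        (-(ε * Real.cos ν / 2) * (x₁^2 + x₂^2 + x₃^2)
         + (1/κ) * (μ / (4 * Real.sqrt ((1+x₁)^2 + x₂^2))
            + 1 / Real.sqrt ((1+x₁)^2 + x₂^2 + (2*μ+1)*x₃^2))
         + x₁))
    (x₁ x₂ : ℝ) (h : (1+x₁)^2 + x₂^2 ≠ 0) :
    (∀ (ν ε : ℝ), 0 ≤ ε → ε < 1 →
        HasDerivAt (fun s => V s x₂ 0 ν ε) (-x₁) x₁ ∧
        HasDerivAt (fun s => V x₁ s 0 ν ε) (-x₂) x₂ ∧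
        HasDerivAt (fun s => V x₁ x₂ s ν ε) 0 0)
      ↔ (1+x₁)^2 + x₂^2 = 1 := by
  have hd : 0 < (1 + x₁) ^ 2 + x₂ ^ 2 := h.symm.lt_of_le (by positivity)
  have hplane : ∀ a b ν ε, V a b 0 ν ε = planarPotential (ε * cos ν) a b := fun a b ν ε => by
    simp only [hV, hκ, ne_eq, OfNat.ofNat_ne_zero, not_false_eq_true, zero_pow, mul_zero,
      add_zero, planarPotential, one_div]
    rw [add_four_div_four_inv_mul_add_inv (by linarith)]
  have hvert : ∀ ν ε, HasDerivAt (fun s => V x₁ x₂ s ν ε) 0 0 := fun ν ε => by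
    simp only [hV]
    refine hasDerivAt_comp_sq_zero (g := fun t => 1 / (1 + ε * cos ν) *
      (-(ε * cos ν / 2) * (x₁ ^ 2 + x₂ ^ 2 + t) + 1 / κ * (μ / (4 * √((1 + x₁) ^ 2 + x₂ ^ 2)) +
        1 / √((1 + x₁) ^ 2 + x₂ ^ 2 + (2 * μ + 1) * t)) + x₁)) ?_
    fun_prop (disch := simp [h, hd, sqrt_ne_zero'])
  constructor
  · intro H
    obtain ⟨H₁, H₂, -⟩ := H 0 0 le_rfl one_pos
    simp only [hplane, zero_mul] at H₁ H₂
    have e₁ := (hasDerivAt_planarPotential_fst (by norm_num) hd).unique H₁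
    have e₂ := (hasDerivAt_planarPotential_snd (by norm_num) hd).unique H₂
    rw [add_zero, div_one, add_eq_left, mul_eq_zero, sub_eq_zero] at e₁ e₂
    refine eq_one_of_inv_sqrt_pow_three_eq_one ?_
    rcases e₁ with e₁ | e₁
    · exact e₁.symm
    rcases e₂ with e₂ | e₂
    · exact e₂.symm
    exact absurd (by simp [e₁, e₂]) h
  · intro hone ν ε hε₀ hε₁
    have he := (one_add_mul_cos_pos hε₀ hε₁ ν).ne'
    exact ⟨by simpa [hplane, hone] using hasDerivAt_planarPotential_fst he hd,
      by simpa [hplane, hone] using hasDerivAt_planarPotential_snd he hd, hvert ν ε⟩
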